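/- Let Ω be a finite set with fixed-point-free involutions s₀, s₁, and let G be a group acting on Ω commuting with s₀ and s₁. Suppose an orbit O of ⟨s₀,s₁⟩ on Ω meets exactly three G-orbit classes A, B, C, such that: s₀ fixes A∩O setwise and exchanges B∩O and C∩O, while s₁ fixes C∩O setwise and exchanges A∩O and B∩O. Then |O| is divisible by 6, i.e., |O| = 6n for some n ≥ 1. -/

import Mathlib

/-!
The two classes exchanged by `s₁` have the same size, and so do the two exchanged by `s₀`, so
the three classes meet `O` in equally many flags and `|O| = 3 |O ∩ A|`. On `O ∩ A` the involution
`s₀` acts without fixed points, so `|O ∩ A|` is even and positive, whence `6 ∣ |O|`.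
-/

open Function MulAction Set

theorem Set.even_ncard_of_involutive {α : Type*} [Finite α] {s : Set α} {f : α → α}
    (hf : Involutive f) (hfix : ∀ x ∈ s, f x ≠ x) (hmaps : MapsTo f s s) : Even s.ncard := by
  classical
  have : Fintype s := Fintype.ofFinite s
  let g : Function.End s := hmaps.restrict
  have hg : g ^ 2 ^ 1 = 1 := funext fun x => Subtype.ext (hf x.1)
  have hnofix : IsEmpty g.fixedPoints :=
    ⟨fun ⟨x, hx⟩ => hfix x.1 x.2 (congrArg Subtype.val hx)⟩
  have hmod := Equiv.Perm.card_fixedPoints_modEq (p := 2) hg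
  rw [Fintype.card_eq_zero (α := g.fixedPoints), ← Nat.card_eq_fintype_card, Nat.card_coe_set_eq] at hmod
  exact even_iff_two_dvd.mpr (Nat.modEq_zero_iff_dvd.mp hmod)

theorem Set.ncard_eq_of_mapsTo_of_mapsTo {α : Type*} [Finite α] {s t : Set α} {f : α → α}
    (hf : Injective f) (hst : MapsTo f s t) (hts : MapsTo f t s) : s.ncard = t.ncard :=
  le_antisymm (ncard_le_ncard_of_injOn f hst hf.injOn) (ncard_le_ncard_of_injOn f hts hf.injOn)

theorem Set.ncard_eq_ncard_inter_add_add {α : Type*} [Finite α] {s a b c : Set α}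
    (hcover : s ⊆ a ∪ b ∪ c) (hab : Disjoint a b) (hac : Disjoint a c) (hbc : Disjoint b c) :
    s.ncard = (s ∩ a).ncard + (s ∩ b).ncard + (s ∩ c).ncard := by
  have hsplit : s = s ∩ a ∪ s ∩ b ∪ s ∩ c := by
    rw [← inter_union_distrib_left, ← inter_union_distrib_left, inter_eq_left.mpr hcover]
  have hab' : Disjoint (s ∩ a) (s ∩ b) := hab.mono inter_subset_right inter_subset_right
  have habc : Disjoint (s ∩ a ∪ s ∩ b) (s ∩ c) :=
    disjoint_union_left.mpr ⟨hac.mono inter_subset_right inter_subset_right,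
      hbc.mono inter_subset_right inter_subset_right⟩
  conv_lhs => rw [hsplit]
  rw [ncard_union_eq habc, ncard_union_eq hab']

theorem MulAction.mapsTo_orbit_of_mem {α : Type*} {H : Subgroup (Equiv.Perm α)} {s : Equiv.Perm α}
    (hs : s ∈ H) (x : α) : MapsTo s (orbit H x) (orbit H x) :=
  fun _ hy => mem_orbit_of_mem_orbit (⟨s, hs⟩ : H) hy

theorem MulAction.disjoint_of_isOrbit_of_ne {G X : Type*} [Group G] [MulAction G X] {A B : Set X}
    (hA : ∃ a, A = orbit G a) (hB : ∃ b, B = orbit G b) (hAB : A ≠ B) : Disjoint A B := by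
  obtain ⟨a, rfl⟩ := hA
  obtain ⟨b, rfl⟩ := hB
  exact (orbit.eq_or_disjoint a b).resolve_left hAB

theorem stmt_4_general (Ω : Type*) [Fintype Ω] (s₀ s₁ : Equiv.Perm Ω)
    (h0inv : ∀ x, s₀ (s₀ x) = x)
    (h0f : ∀ x, s₀ x ≠ x)
    (G : Type*) [Group G] [MulAction G Ω]
    (Φ₀ : Ω) (O : Set Ω)
    (hO : O = (MulAction.orbit (Subgroup.closure ({s₀, s₁} : Set (Equiv.Perm Ω))) Φ₀ : Set Ω))
    (A B C : Set Ω)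
    (hA : ∃ a, A = MulAction.orbit G a) (hB : ∃ b, B = MulAction.orbit G b)
    (hC : ∃ c, C = MulAction.orbit G c)
    (hAB : A ≠ B) (hAC : A ≠ C) (hBC : B ≠ C)
    (hcover : O ⊆ A ∪ B ∪ C)
    (hOA : (O ∩ A).Nonempty)
    -- s₀ fixes A∩O setwise and exchanges B∩O and C∩O:
    (h0A : ∀ Φ ∈ O ∩ A, s₀ Φ ∈ A) (h0B : ∀ Φ ∈ O ∩ B, s₀ Φ ∈ C) (h0C : ∀ Φ ∈ O ∩ C, s₀ Φ ∈ B)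
    -- s₁ fixes C∩O setwise and exchanges A∩O and B∩O:
    (h1A : ∀ Φ ∈ O ∩ A, s₁ Φ ∈ B) (h1B : ∀ Φ ∈ O ∩ B, s₁ Φ ∈ A) :
    ∃ n : ℕ, 1 ≤ n ∧ Nat.card O = 6 * n := by
  have hO₀ : MapsTo s₀ O O := hO ▸ mapsTo_orbit_of_mem (Subgroup.subset_closure (by simp)) Φ₀
  have hO₁ : MapsTo s₁ O O := hO ▸ mapsTo_orbit_of_mem (Subgroup.subset_closure (by simp)) Φ₀
  have hAB_card : (O ∩ A).ncard = (O ∩ B).ncard :=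
    ncard_eq_of_mapsTo_of_mapsTo s₁.injective (fun x hx => ⟨hO₁ hx.1, h1A x hx⟩)
      (fun x hx => ⟨hO₁ hx.1, h1B x hx⟩)
  have hBC_card : (O ∩ B).ncard = (O ∩ C).ncard :=
    ncard_eq_of_mapsTo_of_mapsTo s₀.injective (fun x hx => ⟨hO₀ hx.1, h0B x hx⟩)
      (fun x hx => ⟨hO₀ hx.1, h0C x hx⟩)
  have hsum := ncard_eq_ncard_inter_add_add hcover (disjoint_of_isOrbit_of_ne hA hB hAB)
    (disjoint_of_isOrbit_of_ne hA hC hAC) (disjoint_of_isOrbit_of_ne hB hC hBC)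
  obtain ⟨k, hk⟩ : Even (O ∩ A).ncard :=
    even_ncard_of_involutive h0inv (fun x _ => h0f x) fun x hx => ⟨hO₀ hx.1, h0A x hx⟩
  have hpos : 0 < (O ∩ A).ncard := (ncard_pos (toFinite _)).mpr hOA
  refine ⟨k, by omega, ?_⟩
  rw [Nat.card_coe_set_eq]
  omega

theorem stmt_4 (Ω : Type*) [Fintype Ω] (s₀ s₁ : Equiv.Perm Ω)
    (h0inv : ∀ x, s₀ (s₀ x) = x) (h1inv : ∀ x, s₁ (s₁ x) = x)
    (h0f : ∀ x, s₀ x ≠ x) (h1f : ∀ x, s₁ x ≠ x)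
    (G : Type*) [Group G] [MulAction G Ω]
    (hc0 : ∀ (g : G) (x : Ω), s₀ (g • x) = g • s₀ x)
    (hc1 : ∀ (g : G) (x : Ω), s₁ (g • x) = g • s₁ x)
    (Φ₀ : Ω) (O : Set Ω)
    (hO : O = (MulAction.orbit (Subgroup.closure ({s₀, s₁} : Set (Equiv.Perm Ω))) Φ₀ : Set Ω))
    (A B C : Set Ω)
    (hA : ∃ a, A = MulAction.orbit G a) (hB : ∃ b, B = MulAction.orbit G b)
    (hC : ∃ c, C = MulAction.orbit G c)
    (hAB : A ≠ B) (hAC : A ≠ C) (hBC : B ≠ C)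
    (hcover : O ⊆ A ∪ B ∪ C)
    (hOA : (O ∩ A).Nonempty) (hOB : (O ∩ B).Nonempty) (hOC : (O ∩ C).Nonempty)
    -- s₀ fixes A∩O setwise and exchanges B∩O and C∩O:
    (h0A : ∀ Φ ∈ O ∩ A, s₀ Φ ∈ A) (h0B : ∀ Φ ∈ O ∩ B, s₀ Φ ∈ C) (h0C : ∀ Φ ∈ O ∩ C, s₀ Φ ∈ B)
    -- s₁ fixes C∩O setwise and exchanges A∩O and B∩O:
    (h1C : ∀ Φ ∈ O ∩ C, s₁ Φ ∈ C) (h1A : ∀ Φ ∈ O ∩ A, s₁ Φ ∈ B) (h1B : ∀ Φ ∈ O ∩ B, s₁ Φ ∈ A) :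
    ∃ n : ℕ, 1 ≤ n ∧ Nat.card O = 6 * n :=
  stmt_4_general Ω s₀ s₁ h0inv h0f G Φ₀ O hO A B C hA hB hC hAB hAC hBC hcover hOA h0A h0B h0C h1A
    h1B
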